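/- arXiv:1910.05848 — 2 statements merged into one kernel-verified Lean document; each statement's English description precedes it below -/
import Mathlib

section
/- Let P be the weight lattice of sl_{n+1} with fundamental weights ω_1,…,ω_n, simple roots α_1,…,α_n, and the symmetric bilinear form ( , ) on P determined by (ω_i, α_j) = δ_{ij}. If λ, μ ∈ P⁺ with λ − μ ∈ Q⁺ (a nonnegative integer combination of simple roots), and μ = 2μ₀ + μ₁ with μ₀ ∈ P⁺ and μ₁ ∈ P⁺(1) (i.e. (μ₁, α_i) ≤ 1 for all i), then (λ + μ₁, λ − μ) is a nonnegative even integer. -/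
open Finset

abbrev Wt (n : ℕ) := Fin n → ℤ

def omegaW (n : ℕ) (k : ℕ) : Wt n := fun i => if (i : ℕ) + 1 = k then 1 else 0

def alphaW (n : ℕ) (k : ℕ) : Wt n := fun i =>
  if (i : ℕ) + 1 = k then 2 else if (i : ℕ) + 2 = k ∨ (i : ℕ) = k then -1 else 0

def coeffW (n : ℕ) (l : Wt n) (k : ℕ) : ℤ := ∑ i : Fin n, if (i : ℕ) + 1 = k then l i else 0

def IsDom (n : ℕ) (l : Wt n) : Prop := ∀ i, 0 ≤ l i

def IsDomOne (n : ℕ) (l : Wt n) : Prop := ∀ i, 0 ≤ l i ∧ l i ≤ 1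

def InQplus (n : ℕ) (w : Wt n) : Prop :=
  ∃ c : ℕ → ℕ, w = ∑ k ∈ Finset.Icc 1 n, (c k : ℤ) • alphaW n k

def InQ (n : ℕ) (w : Wt n) : Prop :=
  ∃ c : ℕ → ℤ, w = ∑ k ∈ Finset.Icc 1 n, c k • alphaW n k

noncomputable def formW (n : ℕ) (x y : Wt n) : ℚ :=
  ∑ i : Fin n, ∑ j : Fin n, (x i : ℚ) * (y j : ℚ) *
    ((((min i.val j.val : ℕ) : ℚ) + 1) * ((n : ℚ) + 1 - (((max i.val j.val : ℕ) : ℚ) + 1)) / ((n : ℚ) + 1))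

noncomputable def qpow (r : ℚ) : RatFunc ℚ := if r.den = 1 then RatFunc.X ^ r.num else 0

noncomputable def qint (k : ℤ) : RatFunc ℚ := (1 - RatFunc.X ^ k) / (1 - RatFunc.X)

noncomputable def qbinom (m r : ℤ) : RatFunc ℚ :=
  if 0 ≤ r ∧ r ≤ m then ∏ k ∈ Finset.range r.toNat, qint (m - (k : ℤ)) / qint ((k : ℤ) + 1) else 0

noncomputable def qbinomQ (m r : ℚ) : RatFunc ℚ :=
  if m.den = 1 ∧ r.den = 1 then qbinom m.num r.num else 0

noncomputable def Mw (n i j : ℕ) : ℚ :=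
  (((min i j : ℕ) : ℚ) + 1) * ((n : ℚ) + 1 - (((max i j : ℕ) : ℚ) + 1)) / ((n : ℚ) + 1)

lemma formW_eq (n : ℕ) (x y : Wt n) :
    formW n x y = ∑ i : Fin n, ∑ j : Fin n, (x i : ℚ) * (y j : ℚ) * Mw n i.val j.val := rfl

lemma Mw_identity (n i a : ℕ) (hi : i < n) (ha : a < n) :
    2 * Mw n i a + (if 1 ≤ a then -Mw n i (a - 1) else 0)
      + (if a + 1 < n then -Mw n i (a + 1) else 0) = if i = a then 1 else 0 := by
  have hn : ((n : ℚ) + 1) ≠ 0 := by positivity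
  rcases lt_trichotomy i a with h | h | h
  · -- i < a, so 1 ≤ a
    rw [if_pos (by omega : 1 ≤ a), if_neg (by omega : ¬ i = a)]
    unfold Mw
    rw [Nat.min_eq_left (by omega), Nat.max_eq_right (by omega),
        Nat.min_eq_left (by omega), Nat.max_eq_right (by omega),
        Nat.cast_sub (by omega : 1 ≤ a)]
    by_cases hb : a + 1 < n
    · rw [if_pos hb, Nat.min_eq_left (by omega), Nat.max_eq_right (by omega)]
      push_cast
      field_simp
      ring
    · rw [if_neg hb]
      obtain rfl : n = a + 1 := by omega
      push_cast
      field_simp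
      ring
  · subst h
    rw [if_pos rfl]
    unfold Mw
    rw [min_self, max_self]
    by_cases h1 : 1 ≤ i
    · rw [if_pos h1, Nat.min_eq_right (by omega), Nat.max_eq_left (by omega),
        Nat.cast_sub (by omega : 1 ≤ i)]
      by_cases hb : i + 1 < n
      · rw [if_pos hb, Nat.min_eq_left (by omega), Nat.max_eq_right (by omega)]
        push_cast
        field_simp
        ring
      · rw [if_neg hb]
        obtain rfl : n = i + 1 := by omega
        push_cast
        field_simp
        ring
    · obtain rfl : i = 0 := by omega
      rw [if_neg (by omega)]
      by_cases hb : 0 + 1 < n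
      · rw [if_pos hb, Nat.min_eq_left (by omega), Nat.max_eq_right (by omega)]
        push_cast
        field_simp
        ring
      · rw [if_neg hb]
        obtain rfl : n = 1 := by omega
        norm_num [Mw]
  · -- i > a, then a + 1 ≤ i < n so a + 1 < n
    rw [if_neg (by omega : ¬ i = a), if_pos (by omega : a + 1 < n)]
    by_cases h1 : 1 ≤ a
    · rw [if_pos h1]
      unfold Mw
      rw [Nat.min_eq_right (by omega), Nat.max_eq_left (by omega),
          Nat.min_eq_right (by omega), Nat.max_eq_left (by omega),
          Nat.min_eq_right (by omega), Nat.max_eq_left (by omega),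
          Nat.cast_sub (by omega : 1 ≤ a)]
      push_cast
      field_simp
      ring
    · rw [if_neg h1]
      obtain rfl : a = 0 := by omega
      unfold Mw
      rw [Nat.min_eq_right (by omega), Nat.max_eq_left (by omega),
          Nat.min_eq_right (by omega), Nat.max_eq_left (by omega)]
      push_cast
      field_simp
      ring

lemma sum_ite_val (n m : ℕ) (f : ℕ → ℚ) :
    ∑ j : Fin n, (if (j : ℕ) = m then f (j : ℕ) else 0) = if m < n then f m else 0 := by
  by_cases h : m < n
  · rw [if_pos h, Finset.sum_eq_single (⟨m, h⟩ : Fin n)]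
    · simp
    · intro b _ hb
      rw [if_neg]
      intro hbm
      exact hb (Fin.ext hbm)
    · simp
  · rw [if_neg h]
    apply Finset.sum_eq_zero
    intro j _
    rw [if_neg]
    omega

lemma innerSumA (n a : ℕ) (ha : a < n) (i : Fin n) :
    ∑ j : Fin n, ((alphaW n (a + 1) j : ℤ) : ℚ) * Mw n i.val j.val
      = if (i : ℕ) = a then 1 else 0 := by
  have hsplit : ∀ j : Fin n, ((alphaW n (a + 1) j : ℤ) : ℚ) * Mw n i.val j.val
      = (if (j : ℕ) = a then 2 * Mw n i.val (j : ℕ) else 0)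
        + ((if 1 ≤ a then (if (j : ℕ) = a - 1 then -Mw n i.val (j : ℕ) else 0) else 0)
        + (if (j : ℕ) = a + 1 then -Mw n i.val (j : ℕ) else 0)) := by
    intro j
    unfold alphaW
    by_cases h1 : 1 ≤ a
    · rw [if_pos h1]
      split_ifs <;> (try push_cast) <;> first | ring1 | (exfalso; omega)
    · rw [if_neg h1]
      obtain rfl : a = 0 := by omega
      split_ifs <;> (try push_cast) <;> first | ring1 | (exfalso; omega)
  rw [Finset.sum_congr rfl (fun j _ => hsplit j), Finset.sum_add_distrib,
    Finset.sum_add_distrib, sum_ite_val n a (fun t => 2 * Mw n i.val t),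
    sum_ite_val n (a + 1) (fun t => -Mw n i.val t)]
  have h2 : ∑ j : Fin n, (if 1 ≤ a then (if (j : ℕ) = a - 1 then -Mw n i.val (j : ℕ) else 0) else 0)
      = if 1 ≤ a then -Mw n i.val (a - 1) else 0 := by
    by_cases h1 : 1 ≤ a
    · simp only [if_pos h1]
      rw [sum_ite_val n (a - 1) (fun t => -Mw n i.val t), if_pos (by omega)]
    · simp [if_neg h1]
  rw [h2, if_pos ha]
  have := Mw_identity n i.val a i.isLt ha
  linarith [this]

lemma formW_alphaW (n : ℕ) (x : Wt n) (k : ℕ) (hk1 : 1 ≤ k) (hkn : k ≤ n) :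
    formW n x (alphaW n k) = (coeffW n x k : ℚ) := by
  obtain ⟨a, rfl⟩ : ∃ a, k = a + 1 := ⟨k - 1, by omega⟩
  have ha : a < n := by omega
  rw [formW_eq]
  have step : ∀ i : Fin n,
      ∑ j : Fin n, (x i : ℚ) * ((alphaW n (a + 1) j : ℤ) : ℚ) * Mw n i.val j.val
        = (x i : ℚ) * (if (i : ℕ) = a then 1 else 0) := by
    intro i
    rw [← innerSumA n a ha i, Finset.mul_sum]
    exact Finset.sum_congr rfl fun j _ => by ring
  rw [Finset.sum_congr rfl fun i _ => step i]
  unfold coeffW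
  push_cast
  refine Finset.sum_congr rfl fun i _ => ?_
  by_cases h : (i : ℕ) = a
  · rw [if_pos h, if_pos (by omega), mul_one]
  · rw [if_neg h, if_neg (by omega), mul_zero]

lemma formW_zero_right (n : ℕ) (x : Wt n) : formW n x 0 = 0 := by
  rw [formW_eq]
  simp

lemma formW_add_right (n : ℕ) (x y z : Wt n) :
    formW n x (y + z) = formW n x y + formW n x z := by
  rw [formW_eq, formW_eq, formW_eq, ← Finset.sum_add_distrib]
  refine Finset.sum_congr rfl fun i _ => ?_
  rw [← Finset.sum_add_distrib]
  refine Finset.sum_congr rfl fun j _ => ?_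
  have : ((y + z) j : ℚ) = (y j : ℚ) + (z j : ℚ) := by push_cast [Pi.add_apply]; ring
  rw [this]; ring

lemma formW_smul_right (n : ℕ) (x y : Wt n) (c : ℤ) :
    formW n x (c • y) = (c : ℚ) * formW n x y := by
  rw [formW_eq, formW_eq, Finset.mul_sum]
  refine Finset.sum_congr rfl fun i _ => ?_
  rw [Finset.mul_sum]
  refine Finset.sum_congr rfl fun j _ => ?_
  have : ((c • y) j : ℚ) = (c : ℚ) * (y j : ℚ) := by
    rw [Pi.smul_apply, smul_eq_mul]; push_cast; ring
  rw [this]; ring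

lemma formW_sum_smul (n : ℕ) (x : Wt n) (s : Finset ℕ) (c : ℕ → ℤ) (g : ℕ → Wt n) :
    formW n x (∑ k ∈ s, c k • g k) = ∑ k ∈ s, (c k : ℚ) * formW n x (g k) := by
  induction s using Finset.cons_induction with
  | empty => simpa using formW_zero_right n x
  | cons a s ha ih =>
      rw [Finset.sum_cons, Finset.sum_cons, formW_add_right, formW_smul_right, ih]

lemma coeffW_add (n : ℕ) (x y : Wt n) (k : ℕ) :
    coeffW n (x + y) k = coeffW n x k + coeffW n y k := by
  unfold coeffW
  rw [← Finset.sum_add_distrib]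
  refine Finset.sum_congr rfl fun i _ => ?_
  by_cases h : (i : ℕ) + 1 = k <;> simp [h]

lemma coeffW_smul (n : ℕ) (x : Wt n) (c : ℤ) (k : ℕ) :
    coeffW n (c • x) k = c * coeffW n x k := by
  unfold coeffW
  rw [Finset.mul_sum]
  refine Finset.sum_congr rfl fun i _ => ?_
  by_cases h : (i : ℕ) + 1 = k <;> simp [h]

lemma coeffW_nonneg (n : ℕ) (x : Wt n) (k : ℕ) (hx : ∀ i, 0 ≤ x i) :
    0 ≤ coeffW n x k := by
  apply Finset.sum_nonneg
  intro i _
  by_cases h : (i : ℕ) + 1 = k <;> simp [h, hx i]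

lemma coeffW_sum (n : ℕ) (s : Finset ℕ) (g : ℕ → Wt n) (k : ℕ) :
    coeffW n (∑ l ∈ s, g l) k = ∑ l ∈ s, coeffW n (g l) k := by
  induction s using Finset.cons_induction with
  | empty => simp [coeffW]
  | cons a s ha ih => rw [Finset.sum_cons, Finset.sum_cons, coeffW_add, ih]

lemma coeffW_alphaW (n k l : ℕ) (hk1 : 1 ≤ k) (hkn : k ≤ n) (hl1 : 1 ≤ l) :
    coeffW n (alphaW n l) k =
      if k = l then 2 else if k + 1 = l ∨ l + 1 = k then -1 else 0 := by
  unfold coeffW alphaW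
  rw [Finset.sum_eq_single (⟨k - 1, by omega⟩ : Fin n)]
  · simp only [if_pos (show (k-1) + 1 = k by omega)]
    split_ifs <;> first | rfl | omega
  · intro b _ hb
    rw [if_neg]
    intro hbk
    exact hb (Fin.ext (by simp only [Fin.val_mk]; omega))
  · intro h
    exact absurd (Finset.mem_univ _) h

lemma even_double_sum (s : Finset ℕ) (f : ℕ → ℕ → ℤ)
    (hsymm : ∀ k ∈ s, ∀ l ∈ s, f k l = f l k)
    (hdiag : ∀ k ∈ s, Even (f k k)) :
    Even (∑ k ∈ s, ∑ l ∈ s, f k l) := by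
  induction s using Finset.induction_on with
  | empty => simp
  | @insert a s ha ih =>
    rw [Finset.sum_insert ha, Finset.sum_insert ha]
    have h1 : ∑ k ∈ s, ∑ l ∈ insert a s, f k l
        = (∑ k ∈ s, f k a) + ∑ k ∈ s, ∑ l ∈ s, f k l := by
      rw [← Finset.sum_add_distrib]
      exact Finset.sum_congr rfl fun k hk => Finset.sum_insert ha
    rw [h1]
    have h2 : ∑ k ∈ s, f k a = ∑ l ∈ s, f a l :=
      Finset.sum_congr rfl fun k hk =>
        hsymm k (Finset.mem_insert_of_mem hk) a (Finset.mem_insert_self a s)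
    have h3 : Even (∑ k ∈ s, ∑ l ∈ s, f k l) :=
      ih (fun k hk l hl => hsymm k (Finset.mem_insert_of_mem hk) l (Finset.mem_insert_of_mem hl))
        (fun k hk => hdiag k (Finset.mem_insert_of_mem hk))
    obtain ⟨u, hu⟩ := hdiag a (Finset.mem_insert_self a s)
    obtain ⟨v, hv⟩ := h3
    exact ⟨u + (∑ l ∈ s, f a l) + v, by rw [h2] at *; linarith [hu, hv]⟩

/-- (λ + μ₁, λ − μ) is a nonnegative even integer. -/
theorem form_even_nonneg (n : ℕ) (lam mu mu0 mu1 : Wt n)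
    (hlam : IsDom n lam) (hmu : IsDom n mu)
    (hdiff : InQplus n (lam - mu))
    (hmu0 : IsDom n mu0) (hmu1 : IsDomOne n mu1)
    (hdec : mu = 2 • mu0 + mu1) :
    ∃ k : ℕ, formW n (lam + mu1) (lam - mu) = 2 * (k : ℚ) := by
  obtain ⟨c, hc⟩ := hdiff
  have hx : ∀ i, 0 ≤ (lam + mu1) i := fun i => add_nonneg (hlam i) (hmu1 i).1
  have hform : formW n (lam + mu1) (lam - mu)
      = ∑ k ∈ Finset.Icc 1 n, ((c k : ℤ) : ℚ) * (coeffW n (lam + mu1) k : ℚ) := by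
    rw [hc, formW_sum_smul]
    refine Finset.sum_congr rfl fun k hk => ?_
    obtain ⟨hk1, hkn⟩ := Finset.mem_Icc.mp hk
    rw [formW_alphaW n _ k hk1 hkn]
  set T : ℤ := ∑ k ∈ Finset.Icc 1 n, (c k : ℤ) * coeffW n (lam + mu1) k with hT
  have hVT : formW n (lam + mu1) (lam - mu) = (T : ℚ) := by
    rw [hform, hT]
    push_cast
    rfl
  have hT0 : 0 ≤ T := Finset.sum_nonneg fun k _ =>
    mul_nonneg (Int.natCast_nonneg _) (coeffW_nonneg n _ k hx)
  have hdecomp : lam + mu1 = (lam - mu) + ((mu0 + mu1) + (mu0 + mu1)) := by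
    funext i
    simp only [hdec, Pi.add_apply, Pi.sub_apply, Pi.smul_apply, two_nsmul]
    ring
  have hTsplit : T = (∑ k ∈ Finset.Icc 1 n, ∑ l ∈ Finset.Icc 1 n,
      (c k : ℤ) * ((c l : ℤ) * coeffW n (alphaW n l) k))
      + 2 * ∑ k ∈ Finset.Icc 1 n, (c k : ℤ) * coeffW n (mu0 + mu1) k := by
    rw [hT, Finset.mul_sum, ← Finset.sum_add_distrib]
    refine Finset.sum_congr rfl fun k hk => ?_
    rw [hdecomp, coeffW_add, coeffW_add (n := n) (x := mu0 + mu1)]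
    have hlm : coeffW n (lam - mu) k
        = ∑ l ∈ Finset.Icc 1 n, (c l : ℤ) * coeffW n (alphaW n l) k := by
      rw [hc, coeffW_sum]
      exact Finset.sum_congr rfl fun l _ => coeffW_smul n _ _ k
    rw [hlm, mul_add, Finset.mul_sum]
    ring
  have hTeven : Even T := by
    rw [hTsplit]
    apply Even.add
    · apply even_double_sum
      · intro k hk l hl
        obtain ⟨hk1, hkn⟩ := Finset.mem_Icc.mp hk
        obtain ⟨hl1, hln⟩ := Finset.mem_Icc.mp hl
        rw [coeffW_alphaW n k l hk1 hkn hl1, coeffW_alphaW n l k hl1 hln hk1]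
        split_ifs <;> first | ring1 | (exfalso; omega)
      · intro k hk
        obtain ⟨hk1, hkn⟩ := Finset.mem_Icc.mp hk
        rw [coeffW_alphaW n k k hk1 hkn hk1, if_pos rfl]
        exact ⟨(c k : ℤ) * (c k : ℤ), by ring⟩
    · exact ⟨∑ k ∈ Finset.Icc 1 n, (c k : ℤ) * coeffW n (mu0 + mu1) k, by ring⟩
  obtain ⟨t, ht⟩ := hTeven
  have ht0 : 0 ≤ t := by omega
  refine ⟨t.toNat, ?_⟩
  have hcast : ((t.toNat : ℕ) : ℚ) = (t : ℚ) := by exact_mod_cast Int.toNat_of_nonneg ht0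
  rw [hVT, ht, hcast]
  push_cast
  ring
end

section
/- For ν, μ ∈ P⁺ with μ(h_m) even, one has p_{ν+ω_m}^{μ+ω_m} = q^{(ν−μ, ω_m)} p_ν^μ. -/
open Finset

open Classical in
noncomputable def pPoly (n : ℕ) (l m m0 m1 : Wt n) : RatFunc ℚ :=
  if IsDom n l ∧ IsDom n m0 ∧ IsDomOne n m1 ∧ m = 2 • m0 + m1 then
    qpow (formW n (l + m1) (l - m) / 2) *
      ∏ j ∈ Finset.Icc 1 n,
        qbinomQ (formW n (l - m) (omegaW n j) + formW n m0 (alphaW n j))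
          (formW n (l - m) (omegaW n j))
  else 0

lemma formW_add_left (n : ℕ) (x y z : Wt n) :
    formW n (x + y) z = formW n x z + formW n y z := by
  unfold formW
  rw [← Finset.sum_add_distrib]
  refine Finset.sum_congr rfl fun i _ => ?_
  rw [← Finset.sum_add_distrib]
  refine Finset.sum_congr rfl fun j _ => ?_
  simp only [Pi.add_apply]
  push_cast
  ring

lemma formW_comm (n : ℕ) (x y : Wt n) : formW n x y = formW n y x := by
  unfold formW
  rw [Finset.sum_comm]
  refine Finset.sum_congr rfl fun i _ => Finset.sum_congr rfl fun j _ => ?_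
  rw [min_comm, max_comm]; ring

lemma qpow_intCast (z : ℤ) : qpow (z : ℚ) = RatFunc.X ^ z := by
  simp [qpow]

lemma qpow_add_of_den (a b : ℚ) (hb : b.den = 1) :
    qpow (a + b) = qpow a * qpow b := by
  have hb' : (b.num : ℚ) = b := (Rat.den_eq_one_iff b).mp hb
  by_cases ha : a.den = 1
  · have ha' : (a.num : ℚ) = a := (Rat.den_eq_one_iff a).mp ha
    rw [← ha', ← hb', ← Int.cast_add, qpow_intCast, qpow_intCast, qpow_intCast,
      zpow_add₀ RatFunc.X_ne_zero]
  · have h2 : (a + b).den ≠ 1 := by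
      intro h
      have e1 : ((a + b).num : ℚ) = a + b := (Rat.den_eq_one_iff _).mp h
      have : a = (((a + b).num - b.num : ℤ) : ℚ) := by push_cast [e1, hb']; ring
      exact ha (by rw [this, Rat.den_intCast])
    simp [qpow, ha, h2]

/-- p_{ν+ω_m}^{μ+ω_m} = q^{(ν−μ, ω_m)} p_ν^μ when μ(h_m) is even. -/
theorem pPoly_shift (n : ℕ) (nu m m0 m1 : Wt n) (k : ℕ)
    (hnu : IsDom n nu) (hm0 : IsDom n m0) (hm1 : IsDomOne n m1)
    (hdec : m = 2 • m0 + m1) (hk1 : 1 ≤ k) (hkn : k ≤ n)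
    (heven : Even (coeffW n m k)) :
    pPoly n (nu + omegaW n k) (m + omegaW n k) m0 (m1 + omegaW n k) =
      qpow (formW n (nu - m) (omegaW n k)) * pPoly n nu m m0 m1 := by
  have hk : k - 1 < n := by omega
  have hks : k - 1 + 1 = k := Nat.sub_add_cancel hk1
  have hkfv : ((⟨k - 1, hk⟩ : Fin n) : ℕ) + 1 = k := hks
  -- coeffW evaluates at (⟨k - 1, hk⟩ : Fin n)
  have hcoeff : coeffW n m k = m (⟨k - 1, hk⟩ : Fin n) := by
    unfold coeffW
    rw [Finset.sum_eq_single (⟨k - 1, hk⟩ : Fin n)]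
    · simp [hkfv]
    · intro b _ hb
      have : (b : ℕ) + 1 ≠ k := fun h => hb (Fin.ext (by omega))
      simp [this]
    · simp
  -- m1 (⟨k - 1, hk⟩ : Fin n) = 0
  have hm1zero : m1 (⟨k - 1, hk⟩ : Fin n) = 0 := by
    have hd : m (⟨k - 1, hk⟩ : Fin n) = m0 (⟨k - 1, hk⟩ : Fin n) + m0 (⟨k - 1, hk⟩ : Fin n)
        + m1 (⟨k - 1, hk⟩ : Fin n) := by
      rw [hdec]; simp only [Pi.add_apply, Pi.smul_apply, two_nsmul]
    obtain ⟨r, hr⟩ := heven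
    rw [hcoeff] at hr
    have h1 := (hm1 (⟨k - 1, hk⟩ : Fin n)).1
    have h2 := (hm1 (⟨k - 1, hk⟩ : Fin n)).2
    omega
  -- conditions for the shifted pPoly
  have hnu' : IsDom n (nu + omegaW n k) := by
    intro i
    simp only [Pi.add_apply, omegaW]
    have := hnu i
    split <;> omega
  have hm1' : IsDomOne n (m1 + omegaW n k) := by
    intro i
    simp only [Pi.add_apply, omegaW]
    by_cases h : (i : ℕ) + 1 = k
    · have : i = (⟨k - 1, hk⟩ : Fin n) := Fin.ext (by omega)
      subst this
      simp [h, hm1zero]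
    · simpa [h] using hm1 i
  have hdec' : m + omegaW n k = 2 • m0 + (m1 + omegaW n k) := by
    rw [hdec, add_assoc]
  have hsub : (nu + omegaW n k) - (m + omegaW n k) = nu - m := by ring
  -- unfold both pPoly
  rw [pPoly, pPoly, if_pos ⟨hnu', hm0, hm1', hdec'⟩, if_pos ⟨hnu, hm0, hm1, hdec⟩, hsub]
  set B : ℚ := formW n (nu - m) (omegaW n k) with hB
  set P : RatFunc ℚ := ∏ j ∈ Finset.Icc 1 n,
        qbinomQ (formW n (nu - m) (omegaW n j) + formW n m0 (alphaW n j))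
          (formW n (nu - m) (omegaW n j)) with hP
  have hform : formW n ((nu + omegaW n k) + (m1 + omegaW n k)) (nu - m) / 2
      = formW n (nu + m1) (nu - m) / 2 + B := by
    have e : (nu + omegaW n k) + (m1 + omegaW n k)
        = (nu + m1) + omegaW n k + omegaW n k := by ring
    rw [e, formW_add_left, formW_add_left, hB, formW_comm n (nu - m)]
    ring
  rw [hform]
  by_cases hbd : B.den = 1
  · rw [qpow_add_of_den _ _ hbd]
    ring
  · have hPz : P = 0 := by
      rw [hP]
      refine Finset.prod_eq_zero (i := k) (Finset.mem_Icc.mpr ⟨hk1, hkn⟩) ?_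
      rw [qbinomQ, if_neg (fun h => hbd h.2)]
    rw [hPz, mul_zero, mul_zero, mul_zero]
end
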